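/- arXiv:0803.2181 — 5 statements merged into one kernel-verified Lean document; each statement's English description precedes it below -/
import Mathlib

section
/- Let d ≥ 1 and let M(j) denote the number of points k = (k_1,...,k_d) in the positive integer lattice Z_+^d with k_1 · k_2 · ... · k_d ≤ j. Then M(j)/(j (log j)^(d-1)) → 1/(d-1)! as j → ∞. -/
/-!
Splitting off the first coordinate gives the recursion `M_{d+1}(j) = ∑_{k ≤ j} M_d(⌊j/k⌋)`,
and `M_1(j) = j`. By induction on `d`, `M_d(j) = F_d(j) + O(j (1 + log j)^(d-2))` for
`F_d(x) = x (log x)^(d-1) / (d-1)!`. In the recursion the inductive errors sum to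
`O(j (1 + log j)^(d-2) ∑ 1/k)`; replacing `⌊j/k⌋` by `j/k` moves `F_d` by
`O((1 + log j)^(d-1))` per term, by the mean value theorem; and
`∑_{k ≤ j} F_d(j/k) = (j/(d-1)!) ∑_{k ≤ j} (log j - log k)^(d-1)/k` is `F_{d+1}(j)` up to
`O(j (log j)^(d-1))`, by comparing the sum of this decreasing function with its integral.
-/

open Filter Real Finset

def hyperbolicBox (d j : ℕ) : Finset (Fin d → ℕ) :=
  (Fintype.piFinset fun _ ↦ Icc 1 j).filter fun k ↦ ∏ i, k i ≤ j

theorem mem_hyperbolicBox {d j : ℕ} {k : Fin d → ℕ} :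
    k ∈ hyperbolicBox d j ↔ (∀ i, 1 ≤ k i) ∧ ∏ i, k i ≤ j := by
  simp only [hyperbolicBox, mem_filter, Fintype.mem_piFinset, mem_Icc]
  refine ⟨fun h ↦ ⟨fun i ↦ (h.1 i).1, h.2⟩,
    fun h ↦ ⟨fun i ↦ ⟨h.1 i, ?_⟩, h.2⟩⟩
  exact (single_le_prod' (fun i _ ↦ h.1 i) (mem_univ i)).trans h.2

theorem cons_mem_hyperbolicBox_succ {d j a : ℕ} {t : Fin d → ℕ} :
    Fin.cons a t ∈ hyperbolicBox (d + 1) j ↔ 1 ≤ a ∧ t ∈ hyperbolicBox d (j / a) := by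
  simp only [mem_hyperbolicBox, Fin.forall_fin_succ, Fin.prod_univ_succ, Fin.cons_zero,
    Fin.cons_succ, and_assoc]
  refine and_congr_right fun ha ↦ and_congr_right fun _ ↦ ?_
  rw [Nat.le_div_iff_mul_le ha, mul_comm]

theorem card_hyperbolicBox_succ (d j : ℕ) :
    #(hyperbolicBox (d + 1) j) = ∑ a ∈ Icc 1 j, #(hyperbolicBox d (j / a)) := by
  rw [← card_sigma]
  refine card_nbij' (fun k ↦ ⟨k 0, Fin.tail k⟩) (fun p ↦ Fin.cons p.1 p.2) ?_ ?_ ?_ ?_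
  · intro k hk
    rw [mem_coe, ← Fin.cons_self_tail k, cons_mem_hyperbolicBox_succ] at hk
    obtain ⟨ht, hprod⟩ := mem_hyperbolicBox.1 hk.2
    have hja : 1 ≤ j / k 0 := (prod_pos fun i _ ↦ ht i).trans_le hprod
    simp only [coe_sigma, Set.mem_sigma_iff, mem_coe, mem_Icc]
    exact ⟨⟨hk.1, (Nat.one_le_div_iff hk.1).1 hja⟩, hk.2⟩
  · rintro ⟨a, t⟩ h
    simp only [coe_sigma, Set.mem_sigma_iff, mem_coe, mem_Icc] at h
    exact cons_mem_hyperbolicBox_succ.2 ⟨h.1.1, h.2⟩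
  · intro k _
    exact Fin.cons_self_tail k
  · rintro ⟨a, t⟩ _
    simp

theorem hyperbolicBox_zero_of_one_le {j : ℕ} (hj : 1 ≤ j) :
    hyperbolicBox 0 j = {Fin.elim0} := by
  ext k
  simp [mem_hyperbolicBox, hj, Subsingleton.elim k Fin.elim0]

theorem card_hyperbolicBox_one (j : ℕ) : #(hyperbolicBox 1 j) = j := by
  rw [card_hyperbolicBox_succ]
  calc ∑ a ∈ Icc 1 j, #(hyperbolicBox 0 (j / a)) = ∑ a ∈ Icc 1 j, 1 := by
        refine sum_congr rfl fun a ha ↦ ?_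
        rw [hyperbolicBox_zero_of_one_le, card_singleton]
        exact (Nat.one_le_div_iff (mem_Icc.1 ha).1).2 (mem_Icc.1 ha).2
    _ = j := by simp

theorem ncard_eq_card_hyperbolicBox (d j : ℕ) :
    Set.ncard {k : Fin d → ℕ | (∀ i, 1 ≤ k i) ∧ (∏ i, k i) ≤ j} =
      #(hyperbolicBox d j) := by
  rw [← Set.ncard_coe_finset]
  congr
  ext k
  simp [mem_hyperbolicBox]

theorem AntitoneOn.abs_sum_Icc_sub_integral_le {f : ℝ → ℝ} {a b : ℕ} (hab : a ≤ b)
    (hf : AntitoneOn f (Set.Icc a b)) (hfb : 0 ≤ f b) :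
    |∑ k ∈ Icc a b, f k - ∫ x in a..b, f x| ≤ f a := by
  have hlow := hf.integral_le_sum_Ico hab
  have hup := hf.sum_le_integral_Ico hab
  have hfa : f b ≤ f a := hf (by simp [hab]) (by simp [hab]) (by exact_mod_cast hab)
  have hsplit_top : ∑ k ∈ Icc a b, f k = ∑ k ∈ Ico a b, f k + f b := by
    rw [← Ico_add_one_right_eq_Icc, sum_Ico_succ_top hab]
  have hsplit_bot : ∑ k ∈ Icc a b, f k = f a + ∑ k ∈ Ico a b, f ↑(k + 1) := by
    rw [← Ico_add_one_right_eq_Icc, sum_eq_sum_Ico_succ_bot (by omega : a < b + 1),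
      sum_Ico_add' (fun k : ℕ ↦ f k)]
  rw [abs_le]
  constructor <;> linarith

theorem integral_log_sub_pow_div (m : ℕ) {x : ℝ} (hx : 0 < x) :
    ∫ t in (1 : ℝ)..x, (log x - log t) ^ m / t = log x ^ (m + 1) / (m + 1) := by
  have hpos : ∀ t ∈ Set.uIcc 1 x, 0 < t := fun t ht ↦ (lt_min one_pos hx).trans_le ht.1
  have hderiv : ∀ t ∈ Set.uIcc 1 x, HasDerivAt (fun t ↦ -(log x - log t) ^ (m + 1) / (m + 1))
      ((log x - log t) ^ m / t) t := by
    intro t ht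
    have := (((hasDerivAt_log (hpos t ht).ne').const_sub (log x)).pow (m + 1)).neg.div_const
      ((m : ℝ) + 1)
    refine this.congr_deriv ?_
    rw [Nat.add_sub_cancel]
    push_cast
    field_simp
  have hcont : ContinuousOn (fun t ↦ (log x - log t) ^ m / t) (Set.uIcc 1 x) :=
    ((continuousOn_const.sub (continuousOn_log.mono fun t ht ↦ (hpos t ht).ne')).pow m).div
      continuousOn_id fun t ht ↦ (hpos t ht).ne'
  rw [intervalIntegral.integral_eq_sub_of_hasDerivAt hderiv hcont.intervalIntegrable]
  simp [neg_div]

theorem abs_sum_log_sub_pow_div_sub_le (m : ℕ) {j : ℕ} (hj : 1 ≤ j) :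
    |∑ k ∈ Icc 1 j, (log j - log k) ^ m / k - log j ^ (m + 1) / (m + 1)| ≤ log j ^ m := by
  have hj' : (1 : ℝ) ≤ j := by exact_mod_cast hj
  have hanti : AntitoneOn (fun t ↦ (log j - log t) ^ m / t) (Set.Icc 1 j) := by
    intro s hs t ht hst
    have hs0 : 0 < s := one_pos.trans_le hs.1
    have hlt : log t ≤ log j := log_le_log (hs0.trans_le hst) ht.2
    have hst' : log s ≤ log t := log_le_log hs0 hst
    exact div_le_div₀ (pow_nonneg (by linarith) m)
      (pow_le_pow_left₀ (by linarith) (by linarith) m) hs0 hst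
  have h := AntitoneOn.abs_sum_Icc_sub_integral_le (a := 1) hj (by rwa [Nat.cast_one])
    (by simp only [sub_self]; positivity)
  rw [Nat.cast_one, integral_log_sub_pow_div m (by linarith)] at h
  simpa using h

theorem abs_mul_log_pow_sub_le (n : ℕ) {x y J : ℝ} (hx : x ∈ Set.Icc 1 J)
    (hy : y ∈ Set.Icc 1 J) :
    |x * log x ^ n - y * log y ^ n| ≤ (n + 1) * (1 + log J) ^ n * |x - y| := by
  have hderiv : ∀ t ∈ Set.Icc 1 J, HasDerivWithinAt (fun t ↦ t * log t ^ n)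
      (log t ^ n + n * log t ^ (n - 1)) (Set.Icc 1 J) t := by
    intro t ht
    have ht0 : t ≠ 0 := (one_pos.trans_le ht.1).ne'
    refine (((hasDerivAt_id t).mul ((hasDerivAt_log ht0).pow n)).congr_deriv ?_)
      |>.hasDerivWithinAt
    simp only [Pi.pow_apply, id]
    field_simp
  have hbound : ∀ t ∈ Set.Icc 1 J,
      ‖log t ^ n + n * log t ^ (n - 1)‖ ≤ (n + 1) * (1 + log J) ^ n := by
    intro t ht
    have hl0 : 0 ≤ log t := log_nonneg ht.1
    have hlJ : log t ≤ log J := log_le_log (one_pos.trans_le ht.1) ht.2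
    have h1 : log t ^ n ≤ (1 + log J) ^ n := by gcongr; linarith
    have h2 : log t ^ (n - 1) ≤ (1 + log J) ^ n :=
      calc log t ^ (n - 1) ≤ (1 + log J) ^ (n - 1) := by gcongr; linarith
        _ ≤ (1 + log J) ^ n := pow_le_pow_right₀ (by linarith) (Nat.sub_le n 1)
    rw [Real.norm_eq_abs, abs_of_nonneg (by positivity)]
    nlinarith [(by positivity : (0 : ℝ) ≤ n)]
  simpa only [Real.norm_eq_abs] using
    (convex_Icc 1 J).norm_image_sub_le_of_norm_hasDerivWithin_le hderiv hbound hy hx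

noncomputable def hyperbolicMainTerm (n : ℕ) (x : ℝ) : ℝ := x * log x ^ n / n.factorial

theorem abs_hyperbolicMainTerm_sub_le (n : ℕ) {x y J : ℝ} (hx : x ∈ Set.Icc 1 J)
    (hy : y ∈ Set.Icc 1 J) (hxy : |x - y| ≤ 1) :
    |hyperbolicMainTerm n x - hyperbolicMainTerm n y| ≤ (n + 1) * (1 + log J) ^ n := by
  have hJ : 0 ≤ log J := log_nonneg (hx.1.trans hx.2)
  have hfact : (1 : ℝ) ≤ n.factorial := by exact_mod_cast n.factorial_pos
  rw [hyperbolicMainTerm, hyperbolicMainTerm, ← sub_div, abs_div, Nat.abs_cast]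
  calc |x * log x ^ n - y * log y ^ n| / n.factorial
      ≤ |x * log x ^ n - y * log y ^ n| := div_le_self (abs_nonneg _) hfact
    _ ≤ (n + 1) * (1 + log J) ^ n * |x - y| := abs_mul_log_pow_sub_le n hx hy
    _ ≤ (n + 1) * (1 + log J) ^ n := mul_le_of_le_one_right (by positivity) hxy

theorem abs_hyperbolicMainTerm_natDiv_sub_le (n : ℕ) {j k : ℕ} (hk : k ∈ Icc 1 j) :
    |hyperbolicMainTerm n (j / k : ℕ) - hyperbolicMainTerm n (j / k : ℝ)| ≤
      (n + 1) * (1 + log j) ^ n := by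
  obtain ⟨hk1, hkj⟩ := mem_Icc.1 hk
  have hk' : (1 : ℝ) ≤ k := by exact_mod_cast hk1
  have hfloor_le : ((j / k : ℕ) : ℝ) ≤ j / k := Nat.cast_div_le
  have hlt_floor : (j / k : ℝ) < (j / k : ℕ) + 1 := by
    simpa only [Nat.floor_div_eq_div] using Nat.lt_floor_add_one ((j : ℝ) / k)
  have hone_le : (1 : ℝ) ≤ (j / k : ℕ) := by exact_mod_cast (Nat.one_le_div_iff hk1).2 hkj
  have hdiv_le : (j / k : ℝ) ≤ j := div_le_self (by positivity) hk'
  refine abs_hyperbolicMainTerm_sub_le n ⟨hone_le, hfloor_le.trans hdiv_le⟩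
    ⟨hone_le.trans hfloor_le, hdiv_le⟩ ?_
  rw [abs_sub_comm, abs_of_nonneg (by linarith)]
  linarith

theorem abs_sum_hyperbolicMainTerm_div_sub_le (n : ℕ) {j : ℕ} (hj : 1 ≤ j) :
    |∑ k ∈ Icc 1 j, hyperbolicMainTerm n (j / k : ℝ) - hyperbolicMainTerm (n + 1) j| ≤
      j * (1 + log j) ^ n := by
  have hj0 : (0 : ℝ) < j := by exact_mod_cast hj
  have hfact : (1 : ℝ) ≤ n.factorial := by exact_mod_cast n.factorial_pos
  have hterm : ∀ k ∈ Icc 1 j, hyperbolicMainTerm n (j / k : ℝ) =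
      j / n.factorial * ((log j - log k) ^ n / k) := by
    intro k hk
    have hk0 : (k : ℝ) ≠ 0 := by exact_mod_cast (Nat.one_le_iff_ne_zero.1 (mem_Icc.1 hk).1)
    rw [hyperbolicMainTerm, log_div hj0.ne' hk0]
    ring
  have hmain : hyperbolicMainTerm (n + 1) j = j / n.factorial * (log j ^ (n + 1) / (n + 1)) := by
    rw [hyperbolicMainTerm, Nat.factorial_succ]
    push_cast
    field_simp
  rw [sum_congr rfl hterm, ← mul_sum, hmain, ← mul_sub, abs_mul, abs_of_pos (by positivity)]
  calc j / n.factorial * |∑ k ∈ Icc 1 j, (log j - log k) ^ n / k - log j ^ (n + 1) / (n + 1)|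
      ≤ j / n.factorial * log j ^ n := by
        gcongr
        exact abs_sum_log_sub_pow_div_sub_le n hj
    _ ≤ j * (1 + log j) ^ n := by
        gcongr
        · exact div_le_self hj0.le hfact
        · linarith

theorem abs_card_hyperbolicBox_succ_sub_le (n : ℕ) {E : ℕ → ℝ}
    (hE : ∀ m, 1 ≤ m → |(#(hyperbolicBox (n + 1) m) : ℝ) - hyperbolicMainTerm n m| ≤ E m)
    {j : ℕ} (hj : 1 ≤ j) :
    |(#(hyperbolicBox (n + 2) j) : ℝ) - hyperbolicMainTerm (n + 1) j| ≤
      ∑ k ∈ Icc 1 j, E (j / k) + (n + 2) * (j * (1 + log j) ^ n) := by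
  set φ := hyperbolicMainTerm n
  have hsplit : (#(hyperbolicBox (n + 2) j) : ℝ) - hyperbolicMainTerm (n + 1) j =
      ∑ k ∈ Icc 1 j, ((#(hyperbolicBox (n + 1) (j / k)) : ℝ) - φ (j / k : ℕ)) +
      ∑ k ∈ Icc 1 j, (φ (j / k : ℕ) - φ (j / k : ℝ)) +
      (∑ k ∈ Icc 1 j, φ (j / k : ℝ) - hyperbolicMainTerm (n + 1) j) := by
    rw [card_hyperbolicBox_succ, Nat.cast_sum, sum_sub_distrib, sum_sub_distrib]
    ring
  have hA : |∑ k ∈ Icc 1 j, ((#(hyperbolicBox (n + 1) (j / k)) : ℝ) - φ (j / k : ℕ))| ≤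
      ∑ k ∈ Icc 1 j, E (j / k) := by
    refine (abs_sum_le_sum_abs _ _).trans (sum_le_sum fun k hk ↦ hE _ ?_)
    exact (Nat.one_le_div_iff (mem_Icc.1 hk).1).2 (mem_Icc.1 hk).2
  have hB : |∑ k ∈ Icc 1 j, (φ (j / k : ℕ) - φ (j / k : ℝ))| ≤
      (n + 1) * (j * (1 + log j) ^ n) :=
    calc _ ≤ ∑ k ∈ Icc 1 j, (n + 1) * (1 + log j) ^ n :=
          (abs_sum_le_sum_abs _ _).trans
            (sum_le_sum fun k hk ↦ abs_hyperbolicMainTerm_natDiv_sub_le n hk)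
      _ = (n + 1) * (j * (1 + log j) ^ n) := by
        simp only [sum_const, Nat.card_Icc, add_tsub_cancel_right, nsmul_eq_mul]
        ring
  have hC := abs_sum_hyperbolicMainTerm_div_sub_le n hj
  rw [hsplit]
  calc _ ≤ _ := abs_add_three _ _ _
    _ ≤ _ := add_le_add_three hA hB hC
    _ = _ := by ring

theorem sum_natDiv_mul_one_add_log_pow_le (n j : ℕ) :
    ∑ k ∈ Icc 1 j, ((j / k : ℕ) : ℝ) * (1 + log (j / k : ℕ)) ^ n ≤
      j * (1 + log j) ^ (n + 1) :=
  calc ∑ k ∈ Icc 1 j, ((j / k : ℕ) : ℝ) * (1 + log (j / k : ℕ)) ^ n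
      ≤ ∑ k ∈ Icc 1 j, (j : ℝ) * (1 + log j) ^ n * (k : ℝ)⁻¹ := by
        refine sum_le_sum fun k hk ↦ ?_
        obtain ⟨hk1, hkj⟩ := mem_Icc.1 hk
        have hq : (1 : ℝ) ≤ (j / k : ℕ) := by exact_mod_cast (Nat.one_le_div_iff hk1).2 hkj
        have hqj : ((j / k : ℕ) : ℝ) ≤ j := by exact_mod_cast Nat.div_le_self j k
        rw [mul_right_comm, ← div_eq_mul_inv]
        gcongr
        exact Nat.cast_div_le
    _ = j * (1 + log j) ^ n * (harmonic j : ℝ) := by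
        rw [← mul_sum, harmonic_eq_sum_Icc]
        push_cast
        rfl
    _ ≤ j * (1 + log j) ^ n * (1 + log j) := by
        have := log_natCast_nonneg j
        gcongr
        exact harmonic_le_one_add_log j
    _ = j * (1 + log j) ^ (n + 1) := by ring

theorem exists_abs_card_hyperbolicBox_sub_le (n : ℕ) : ∃ C : ℝ, 0 ≤ C ∧ ∀ j, 1 ≤ j →
    |(#(hyperbolicBox (n + 2) j) : ℝ) - hyperbolicMainTerm (n + 1) j| ≤
      C * (j * (1 + log j) ^ n) := by
  induction n with
  | zero =>
    refine ⟨2, zero_le_two, fun j hj ↦ ?_⟩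
    have hexact : ∀ m, 1 ≤ m →
        |(#(hyperbolicBox 1 m) : ℝ) - hyperbolicMainTerm 0 m| ≤ 0 := fun m _ ↦ by
      simp [card_hyperbolicBox_one, hyperbolicMainTerm]
    simpa using abs_card_hyperbolicBox_succ_sub_le 0 hexact hj
  | succ n ih =>
    obtain ⟨C, hC0, hC⟩ := ih
    refine ⟨C + (n + 3), by positivity, fun j hj ↦ ?_⟩
    calc _ ≤ ∑ k ∈ Icc 1 j, C * ((j / k : ℕ) * (1 + log (j / k : ℕ)) ^ n) +
          ((n + 1 : ℕ) + 2) * (j * (1 + log j) ^ (n + 1)) :=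
          abs_card_hyperbolicBox_succ_sub_le (n + 1) hC hj
      _ ≤ C * (j * (1 + log j) ^ (n + 1)) +
          ((n + 1 : ℕ) + 2) * (j * (1 + log j) ^ (n + 1)) := by
          rw [← mul_sum]
          gcongr
          exact sum_natDiv_mul_one_add_log_pow_le n j
      _ = (C + (n + 3)) * (j * (1 + log j) ^ (n + 1)) := by push_cast; ring

theorem tendsto_card_hyperbolicBox_div (n : ℕ) :
    Tendsto (fun j : ℕ ↦ (#(hyperbolicBox (n + 1) j) : ℝ) / (j * log j ^ n)) atTop
      (nhds (1 / n.factorial)) := by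
  cases n with
  | zero =>
    refine tendsto_const_nhds.congr' ?_
    filter_upwards [eventually_ge_atTop 1] with j hj
    have hj0 : (j : ℝ) ≠ 0 := by exact_mod_cast (Nat.one_le_iff_ne_zero.1 hj)
    simp [card_hyperbolicBox_one, hj0]
  | succ n =>
    obtain ⟨C, hC0, hC⟩ := exists_abs_card_hyperbolicBox_sub_le n
    have hlog : Tendsto (fun j : ℕ ↦ log j) atTop atTop :=
      tendsto_log_atTop.comp tendsto_natCast_atTop_atTop
    rw [← tendsto_sub_nhds_zero_iff]
    refine squeeze_zero_norm' ?_ ((tendsto_const_nhds (x := C * 2 ^ n)).div_atTop hlog)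
    filter_upwards [eventually_ge_atTop 1, hlog.eventually_ge_atTop 1] with j hj hL
    have hj0 : (0 : ℝ) < j := by exact_mod_cast hj
    have hsub : (#(hyperbolicBox (n + 2) j) : ℝ) / (j * log j ^ (n + 1)) - 1 / (n + 1).factorial =
        ((#(hyperbolicBox (n + 2) j) : ℝ) - hyperbolicMainTerm (n + 1) j) /
          (j * log j ^ (n + 1)) := by
      rw [hyperbolicMainTerm]
      field_simp
    rw [Real.norm_eq_abs, hsub, abs_div,
      abs_of_pos (a := (j : ℝ) * log j ^ (n + 1)) (by positivity)]
    calc _ ≤ C * (j * (1 + log j) ^ n) / (j * log j ^ (n + 1)) :=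
          div_le_div_of_nonneg_right (hC j hj) (by positivity)
      _ ≤ C * (j * (2 * log j) ^ n) / (j * log j ^ (n + 1)) := by gcongr; linarith
      _ = C * 2 ^ n / log j := by field_simp; ring

theorem stmt_4 (d : ℕ) (hd : 1 ≤ d)
    (M : ℕ → ℕ)
    (hM : ∀ j : ℕ, M j =
      Set.ncard {k : Fin d → ℕ | (∀ i, 1 ≤ k i) ∧ (∏ i, k i) ≤ j}) :
    Tendsto (fun j : ℕ => (M j : ℝ) / ((j : ℝ) * (Real.log j) ^ (d - 1)))
      atTop (nhds (1 / (Nat.factorial (d - 1) : ℝ))) := by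
  obtain ⟨n, rfl⟩ := Nat.exists_eq_add_of_le' hd
  simp_rw [hM, ncard_eq_card_hyperbolicBox, Nat.add_sub_cancel]
  exact tendsto_card_hyperbolicBox_div n
end

section
/- Let d ≥ 1, κ ≥ 1, θ > 0, and η ∈ ℝ. The series Σ_{i≥2} d(⌊i^κ (log i)^η⌋) / (i^{κθ} (log i)^{ηθ}) converges if θ > 1/κ and diverges if θ < 1/κ, where d(j) counts points in Z_+^d with coordinate product j. -/
/-!
The divisor bound `τ(n) = O(n^ε)` gives `d(j) ≤ τ(j)^d = O(j^ε)` for every `ε > 0`, while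
`d(j) ≥ 1` for `j ≥ 1`. With `x_i = i^κ (log i)^η` the `i`-th term is `d(⌊x_i⌋) / x_i^θ`, and
since `(log i)^c = O(i^δ)` for every `c` and every `δ > 0`, the terms are eventually
`O(i^(-κθ+δ))` and at least `i^(-κθ-δ)`. Compare with `∑ i^(-s)`.
-/

open Filter Real Finset

lemma add_one_le_pow_of_two_le {q : ℝ} (hq : 2 ≤ q) (a : ℕ) : (a : ℝ) + 1 ≤ q ^ a := by
  have hBernoulli := one_add_mul_sub_le_pow (by linarith : (-1 : ℝ) ≤ q) a
  nlinarith [(a.cast_nonneg : (0 : ℝ) ≤ a)]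

lemma add_one_le_mul_pow {q : ℝ} (hq : 1 < q) (a : ℕ) :
    (a : ℝ) + 1 ≤ (1 + (q - 1)⁻¹) * q ^ a := by
  have hBernoulli := one_add_mul_sub_le_pow (by linarith : (-1 : ℝ) ≤ q) a
  have ha : (a : ℝ) ≤ (q - 1)⁻¹ * q ^ a := by
    rw [inv_mul_eq_div, le_div_iff₀ (sub_pos.2 hq)]
    linarith
  rw [add_mul, one_mul]
  linarith [one_le_pow₀ (M₀ := ℝ) hq.le (n := a)]

theorem Nat.exists_card_divisors_le_mul_rpow {ε : ℝ} (hε : 0 < ε) :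
    ∃ C : ℝ, ∀ n : ℕ, n ≠ 0 → (#n.divisors : ℝ) ≤ C * (n : ℝ) ^ ε := by
  set P := ⌊(2 : ℝ) ^ ε⁻¹⌋₊
  set B := 1 + ((2 : ℝ) ^ ε - 1)⁻¹
  have h2ε : 1 < (2 : ℝ) ^ ε := one_lt_rpow (by norm_num) hε
  have hB : 1 ≤ B := le_add_of_nonneg_right (inv_nonneg.2 (sub_nonneg.2 h2ε.le))
  -- A prime power `p ^ a` with `2 ≤ p ^ ε` has `a + 1 ≤ (p ^ a) ^ ε`; only the primes `p ≤ P`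
  -- can fail this, and each of them loses at most the factor `B`.
  have hprime : ∀ p : ℕ, p.Prime → ∀ a : ℕ,
      (a : ℝ) + 1 ≤ (if p ≤ P then B else 1) * ((p : ℝ) ^ ε) ^ a := by
    intro p hp a
    have hp2 : (2 : ℝ) ≤ p := by exact_mod_cast hp.two_le
    split_ifs with hpP
    · calc (a : ℝ) + 1 ≤ (1 + ((p : ℝ) ^ ε - 1)⁻¹) * ((p : ℝ) ^ ε) ^ a :=
            add_one_le_mul_pow (h2ε.trans_le (rpow_le_rpow (by norm_num) hp2 hε.le)) a
        _ ≤ B * ((p : ℝ) ^ ε) ^ a := by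
            refine mul_le_mul_of_nonneg_right (add_le_add_right ?_ 1) (by positivity)
            gcongr
    · have hpP : (2 : ℝ) ^ ε⁻¹ < p := (Nat.floor_lt (by positivity)).1 (not_le.1 hpP)
      rw [one_mul]
      refine add_one_le_pow_of_two_le ?_ a
      calc (2 : ℝ) = ((2 : ℝ) ^ ε⁻¹) ^ ε := (rpow_inv_rpow (by norm_num) hε.ne').symm
        _ ≤ (p : ℝ) ^ ε := rpow_le_rpow (by positivity) hpP.le hε.le
  refine ⟨B ^ (P + 1), fun n hn => ?_⟩
  have hsmall : (∏ p ∈ n.primeFactors, if p ≤ P then B else 1) ≤ B ^ (P + 1) := by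
    rw [prod_ite, prod_const, prod_const_one, mul_one]
    refine pow_le_pow_right₀ hB ((card_le_card fun p hp => ?_).trans_eq (card_range _))
    simp only [mem_filter, mem_range] at hp ⊢
    omega
  calc (#n.divisors : ℝ) = ∏ p ∈ n.primeFactors, ((n.factorization p : ℝ) + 1) := by
        rw [Nat.card_divisors hn]
        push_cast
        rfl
    _ ≤ ∏ p ∈ n.primeFactors, (if p ≤ P then B else 1) * ((p : ℝ) ^ ε) ^ n.factorization p :=
        prod_le_prod (fun _ _ => by positivity)
          fun p hp => hprime p (Nat.prime_of_mem_primeFactors hp) _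
    _ = (∏ p ∈ n.primeFactors, if p ≤ P then B else 1) * (n : ℝ) ^ ε := by
        simp_rw [prod_mul_distrib, rpow_pow_comm (Nat.cast_nonneg _)]
        rw [finsetProd_rpow _ _ (fun _ _ => by positivity)]
        congr 2
        exact_mod_cast (Nat.prod_primeFactors_pow_factorization hn).symm
    _ ≤ B ^ (P + 1) * (n : ℝ) ^ ε := by gcongr

def orderedFactorizations (d j : ℕ) : Set (Fin d → ℕ) :=
  {k | (∀ i, 1 ≤ k i) ∧ ∏ i, k i = j}

lemma orderedFactorizations_zero (d : ℕ) : orderedFactorizations d 0 = ∅ := by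
  refine Set.eq_empty_of_forall_notMem fun k ⟨hk, hprod⟩ => ?_
  obtain ⟨i, -, hi⟩ := prod_eq_zero_iff.1 hprod
  exact absurd (hk i) (by omega)

lemma orderedFactorizations_subset_piFinset (d : ℕ) {j : ℕ} (hj : j ≠ 0) :
    orderedFactorizations d j ⊆ ↑(Fintype.piFinset fun _ : Fin d => j.divisors) := by
  rintro k ⟨-, hprod⟩
  simp only [mem_coe, Fintype.mem_piFinset, Nat.mem_divisors]
  exact fun i => ⟨hprod ▸ dvd_prod_of_mem _ (mem_univ i), hj⟩

lemma ncard_orderedFactorizations_le (d j : ℕ) :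
    (orderedFactorizations d j).ncard ≤ #j.divisors ^ d := by
  rcases eq_or_ne j 0 with rfl | hj
  · simp [orderedFactorizations_zero]
  · refine (Set.ncard_le_ncard (orderedFactorizations_subset_piFinset d hj)).trans_eq ?_
    rw [Set.ncard_coe_finset, Fintype.card_piFinset_const]

lemma ncard_orderedFactorizations_pos {d j : ℕ} (hd : d ≠ 0) (hj : j ≠ 0) :
    0 < (orderedFactorizations d j).ncard := by
  have hfin : (orderedFactorizations d j).Finite :=
    (finite_toSet _).subset (orderedFactorizations_subset_piFinset d hj)
  let i₀ : Fin d := ⟨0, Nat.pos_of_ne_zero hd⟩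
  refine (Set.ncard_pos hfin).2 ⟨Function.update 1 i₀ j, fun i => ?_, ?_⟩
  · rcases eq_or_ne i i₀ with rfl | hi
    · simpa using Nat.one_le_iff_ne_zero.2 hj
    · simp [hi]
  · simp [prod_update_of_mem (mem_univ i₀)]

lemma exists_ncard_orderedFactorizations_le_mul_rpow {d : ℕ} (hd : d ≠ 0) {ε : ℝ}
    (hε : 0 < ε) : ∃ C : ℝ, ∀ j : ℕ, ((orderedFactorizations d j).ncard : ℝ) ≤ C * (j : ℝ) ^ ε := by
  have hd' : (0 : ℝ) < d := by exact_mod_cast Nat.pos_of_ne_zero hd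
  obtain ⟨C, hC⟩ := Nat.exists_card_divisors_le_mul_rpow (div_pos hε hd')
  refine ⟨C ^ d, fun j => ?_⟩
  rcases eq_or_ne j 0 with rfl | hj
  · simp [orderedFactorizations_zero, zero_rpow hε.ne']
  calc ((orderedFactorizations d j).ncard : ℝ) ≤ (#j.divisors : ℝ) ^ d := by
        exact_mod_cast ncard_orderedFactorizations_le d j
    _ ≤ (C * (j : ℝ) ^ (ε / d)) ^ d := by gcongr; exact hC j hj
    _ = C ^ d * (j : ℝ) ^ ε := by
        rw [mul_pow, ← rpow_natCast, ← rpow_natCast, ← rpow_mul (Nat.cast_nonneg _),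
          div_mul_cancel₀ _ hd'.ne']

lemma eventually_log_rpow_le_rpow (c : ℝ) {δ : ℝ} (hδ : 0 < δ) :
    ∀ᶠ x : ℝ in atTop, log x ^ c ≤ x ^ δ := by
  filter_upwards [(isLittleO_log_rpow_rpow_atTop c hδ).bound one_pos,
    eventually_ge_atTop 1] with x hx hx1
  rwa [norm_of_nonneg (rpow_nonneg (log_nonneg hx1) c),
    norm_of_nonneg (rpow_nonneg (by linarith) δ), one_mul] at hx

lemma rpow_mul_log_rpow_rpow {x : ℝ} (hx : 1 ≤ x) (κ η s : ℝ) :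
    (x ^ κ * log x ^ η) ^ s = x ^ (κ * s) * log x ^ (η * s) := by
  have hlog := log_nonneg hx
  rw [mul_rpow (rpow_nonneg (by linarith) κ) (rpow_nonneg hlog η), ← rpow_mul (by linarith),
    ← rpow_mul hlog]

lemma tendsto_rpow_mul_log_rpow_atTop {κ : ℝ} (hκ : 0 < κ) (η : ℝ) :
    Tendsto (fun x : ℝ => x ^ κ * log x ^ η) atTop atTop := by
  refine tendsto_atTop_mono' _ ?_ (tendsto_rpow_atTop (half_pos hκ))
  filter_upwards [eventually_log_rpow_le_rpow (-η) (half_pos hκ), eventually_gt_atTop 1]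
    with x hlog hx
  have hl : 0 < log x := log_pos hx
  calc x ^ (κ / 2) = x ^ (κ / 2) * (log x ^ (-η) * log x ^ η) := by
        rw [← rpow_add hl, neg_add_cancel, rpow_zero, mul_one]
    _ ≤ x ^ (κ / 2) * (x ^ (κ / 2) * log x ^ η) := by gcongr
    _ = x ^ κ * log x ^ η := by
        rw [← mul_assoc, ← rpow_add (by linarith), add_halves]

noncomputable def powLogSeriesTerm (g : ℕ → ℕ) (κ θ η : ℝ) (i : ℕ) : ℝ :=
  if 2 ≤ i then (g ⌊(i : ℝ) ^ κ * log i ^ η⌋₊ : ℝ) / ((i : ℝ) ^ (κ * θ) * log i ^ (η * θ))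
  else 0

lemma powLogSeriesTerm_eq {g : ℕ → ℕ} {κ θ η : ℝ} {i : ℕ} (hi : 2 ≤ i) :
    powLogSeriesTerm g κ θ η i =
      (g ⌊(i : ℝ) ^ κ * log i ^ η⌋₊ : ℝ) / ((i : ℝ) ^ κ * log i ^ η) ^ θ := by
  rw [powLogSeriesTerm, if_pos hi, rpow_mul_log_rpow_rpow (by exact_mod_cast hi.trans' one_le_two)]

theorem summable_powLogSeriesTerm (g : ℕ → ℕ)
    (hg : ∀ ε : ℝ, 0 < ε → ∃ C : ℝ, ∀ j : ℕ, (g j : ℝ) ≤ C * (j : ℝ) ^ ε) {κ θ : ℝ} (η : ℝ)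
    (hκ : 0 < κ) (hκθ : 1 < κ * θ) : Summable (powLogSeriesTerm g κ θ η) := by
  set δ := (κ * θ - 1) / 4 with hδ_def
  have hδ : 0 < δ := by positivity
  obtain ⟨C, hC⟩ := hg (δ / κ) (div_pos hδ hκ)
  have hC0 : 0 ≤ C := by simpa using (Nat.cast_nonneg _).trans (hC 1)
  have hexp : κ * (δ / κ - θ) = δ - κ * θ := by field_simp
  refine ((summable_nat_rpow.2 (by linarith : δ - κ * θ + δ < -1)).mul_left C
    ).of_norm_bounded_eventually_nat ?_
  filter_upwards [eventually_ge_atTop 2, tendsto_natCast_atTop_atTop.eventually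
    (eventually_log_rpow_le_rpow (η * (δ / κ - θ)) hδ)] with i hi hlog
  have hi1 : (1 : ℝ) ≤ i := by exact_mod_cast hi.trans' one_le_two
  set x := (i : ℝ) ^ κ * log i ^ η
  have hx : 0 < x := mul_pos (by positivity) (rpow_pos_of_pos (log_pos (by exact_mod_cast hi)) η)
  rw [powLogSeriesTerm_eq hi, norm_of_nonneg (by positivity)]
  calc (g ⌊x⌋₊ : ℝ) / x ^ θ ≤ C * x ^ (δ / κ) / x ^ θ := by
        gcongr
        exact (hC _).trans (by gcongr; exact Nat.floor_le hx.le)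
    _ = C * ((i : ℝ) ^ (δ - κ * θ) * log i ^ (η * (δ / κ - θ))) := by
        rw [mul_div_assoc, ← rpow_sub hx, rpow_mul_log_rpow_rpow hi1, hexp]
    _ ≤ C * ((i : ℝ) ^ (δ - κ * θ) * (i : ℝ) ^ δ) := by gcongr
    _ = C * (i : ℝ) ^ (δ - κ * θ + δ) := by rw [← rpow_add (by linarith)]

theorem not_summable_powLogSeriesTerm (g : ℕ → ℕ) (hg : ∀ j : ℕ, j ≠ 0 → 1 ≤ g j)
    {κ θ : ℝ} (η : ℝ) (hκ : 0 < κ) (hκθ : κ * θ < 1) :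
    ¬ Summable (powLogSeriesTerm g κ θ η) := by
  intro hsum
  set δ := (1 - κ * θ) / 2 with hδ_def
  have hδ : 0 < δ := by positivity
  suffices Summable fun i : ℕ => (i : ℝ) ^ (-(κ * θ + δ)) by
    linarith [summable_nat_rpow.1 this]
  refine hsum.of_norm_bounded_eventually_nat ?_
  filter_upwards [eventually_ge_atTop 2,
    tendsto_natCast_atTop_atTop.eventually (eventually_log_rpow_le_rpow (η * θ) hδ),
    ((tendsto_rpow_mul_log_rpow_atTop hκ η).comp tendsto_natCast_atTop_atTop).eventually_ge_atTop 1]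
    with i hi hlog hx
  have hi1 : (1 : ℝ) < i := by exact_mod_cast hi
  have hg1 : (1 : ℝ) ≤ g ⌊(i : ℝ) ^ κ * log i ^ η⌋₊ := by
    exact_mod_cast hg _ (Nat.floor_pos.2 hx).ne'
  have hl : 0 < log i := log_pos hi1
  rw [norm_of_nonneg (by positivity), powLogSeriesTerm, if_pos hi]
  calc (i : ℝ) ^ (-(κ * θ + δ)) = ((i : ℝ) ^ (κ * θ) * (i : ℝ) ^ δ)⁻¹ := by
        rw [rpow_neg (by linarith), rpow_add (by linarith)]
    _ ≤ ((i : ℝ) ^ (κ * θ) * log i ^ (η * θ))⁻¹ := by gcongr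
    _ ≤ _ := by
        rw [div_eq_mul_inv]
        exact le_mul_of_one_le_left (by positivity) hg1

theorem stmt_8_general (d : ℕ) (hd : 1 ≤ d) (κ θ η : ℝ) (hκ : 1 ≤ κ)
    (dc : ℕ → ℕ)
    (hdc : ∀ j : ℕ, dc j =
      Set.ncard {k : Fin d → ℕ | (∀ i, 1 ≤ k i) ∧ (∏ i, k i) = j}) :
    (θ > 1 / κ → Summable (fun i : ℕ =>
        if 2 ≤ i then
          (dc ⌊(i : ℝ) ^ κ * (Real.log i) ^ η⌋₊ : ℝ) /
            ((i : ℝ) ^ (κ * θ) * (Real.log i) ^ (η * θ))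
        else 0)) ∧
    (θ < 1 / κ → ¬ Summable (fun i : ℕ =>
        if 2 ≤ i then
          (dc ⌊(i : ℝ) ^ κ * (Real.log i) ^ η⌋₊ : ℝ) /
            ((i : ℝ) ^ (κ * θ) * (Real.log i) ^ (η * θ))
        else 0)) := by
  have hκ0 : 0 < κ := by linarith
  have hdc' : ∀ j, dc j = (orderedFactorizations d j).ncard := hdc
  refine ⟨fun hθ => summable_powLogSeriesTerm dc (fun ε hε => ?_) η hκ0 ?_,
    fun hθ => not_summable_powLogSeriesTerm dc (fun j hj => ?_) η hκ0 ?_⟩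
  · simpa only [hdc'] using exists_ncard_orderedFactorizations_le_mul_rpow (by omega) hε
  · rwa [gt_iff_lt, div_lt_iff₀ hκ0, mul_comm] at hθ
  · exact hdc' j ▸ ncard_orderedFactorizations_pos (by omega) hj
  · rwa [lt_div_iff₀ hκ0, mul_comm] at hθ

theorem stmt_8 (d : ℕ) (hd : 1 ≤ d) (κ θ η : ℝ) (hκ : 1 ≤ κ) (hθ : 0 < θ)
    (dc : ℕ → ℕ)
    (hdc : ∀ j : ℕ, dc j =
      Set.ncard {k : Fin d → ℕ | (∀ i, 1 ≤ k i) ∧ (∏ i, k i) = j}) :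
    (θ > 1 / κ → Summable (fun i : ℕ =>
        if 2 ≤ i then
          (dc ⌊(i : ℝ) ^ κ * (Real.log i) ^ η⌋₊ : ℝ) /
            ((i : ℝ) ^ (κ * θ) * (Real.log i) ^ (η * θ))
        else 0)) ∧
    (θ < 1 / κ → ¬ Summable (fun i : ℕ =>
        if 2 ≤ i then
          (dc ⌊(i : ℝ) ^ κ * (Real.log i) ^ η⌋₊ : ℝ) /
            ((i : ℝ) ^ (κ * θ) * (Real.log i) ^ (η * θ))
        else 0)) :=
  stmt_8_general d hd κ θ η hκ dc hdc
end

section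
/- Let {X_k : k ∈ Z_+^d} be independent real random variables with mean 0 and finite variances, and S_n = Σ_{k ≤ n} X_k. Then P(max_{k ≤ n} S_k > x) ≤ 2^d P(S_n > x - d·√(2 Var(S_n))) for all x ∈ ℝ. -/
/-!
Let `c = √(2 Var S_n)` and, for `r ≤ d`, let `M_r` be the maximum of `S_k` over the indices
`1 ≤ k ≤ n` that agree with `n` in every coordinate `≥ r` (`pinnedBox n r`), so that `M_0 = S_n`
and `M_d` is the full maximum. It suffices to show `P(M_{r+1} > y) ≤ 2 P(M_r > y - c)` and to
iterate `d` times.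

For this step, order the indices by their `r`-th coordinate, ties broken lexicographically, and
split `{M_{r+1} > y}` according to the first index `m` with `S_m > y`. This first-entry event is
determined by the `X_k` with `k_r ≤ m_r`. Raising `m_r` to `n_r` adds to `S_m` a sum of `X_k` with
`k_r > m_r`: it is independent of the event, has variance at most `Var S_n`, and so by Chebyshev is
`≥ -c` with probability at least `1/2`. On both events `S` exceeds `y - c` at the raised index,
which lies in `pinnedBox n r`.
-/

open MeasureTheory ProbabilityTheory Finset
open scoped ENNReal

lemma measure_lt_neg_sqrt_two_mul_le_half {Ω : Type*} [MeasurableSpace Ω] {μ : Measure Ω}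
    [IsProbabilityMeasure μ] {Y : Ω → ℝ} (hY : MemLp Y 2 μ) (hmean : μ[Y] = 0) {v : ℝ}
    (hv : variance Y μ ≤ v) :
    μ {ω | Y ω < -√(2 * v)} ≤ 2⁻¹ := by
  rcases (variance_nonneg Y μ |>.trans hv).eq_or_lt with rfl | hv_pos
  · have hY0 : ∀ᵐ ω ∂μ, Y ω = 0 := by
      simpa [hmean] using
        ae_eq_integral_of_variance_eq_zero hY (le_antisymm hv (variance_nonneg Y μ))
    have hneg : μ {ω | Y ω < 0} = 0 :=
      measure_mono_null (fun ω hω => ne_of_lt hω) (ae_iff.1 hY0)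
    rw [mul_zero, Real.sqrt_zero, neg_zero, hneg]
    exact zero_le
  · calc μ {ω | Y ω < -√(2 * v)} ≤ μ {ω | √(2 * v) ≤ |Y ω - μ[Y]|} :=
          measure_mono fun ω (hω : Y ω < _) => by
            rw [Set.mem_ofPred_eq, hmean, sub_zero]
            exact (le_neg.2 hω.le).trans (neg_le_abs _)
      _ ≤ ENNReal.ofReal (variance Y μ / √(2 * v) ^ 2) :=
          meas_ge_le_variance_div_sq hY (by positivity)
      _ ≤ ENNReal.ofReal 2⁻¹ := by
          gcongr
          rw [Real.sq_sqrt (by positivity), div_le_iff₀ (by positivity)]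
          linarith
      _ = 2⁻¹ := by rw [ENNReal.ofReal_inv_of_pos two_pos, ENNReal.ofReal_ofNat]

section FirstEntry

variable {Ω ι β : Type*} [LinearOrder β] (J : Finset ι) (κ : ι → β) (A : ι → Set Ω)

def firstEntry (m : ι) : Set Ω :=
  A m \ ⋃ m' ∈ J.filter (κ · < κ m), A m'

lemma biUnion_firstEntry : ⋃ m ∈ J, firstEntry J κ A m = ⋃ m ∈ J, A m := by
  classical
  refine subset_antisymm (Set.biUnion_mono subset_rfl fun m _ => Set.sdiff_subset) ?_
  refine Set.iUnion₂_subset fun m hm ω hω => ?_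
  obtain ⟨m₀, hm₀, hmin⟩ :=
    (J.filter (ω ∈ A ·)).exists_min_image κ ⟨m, mem_filter.2 ⟨hm, hω⟩⟩
  rw [mem_filter] at hm₀
  refine Set.mem_biUnion hm₀.1 ⟨hm₀.2, ?_⟩
  simp only [Set.mem_iUnion, mem_filter, not_exists]
  rintro m' ⟨hm'J, hlt⟩ hm'A
  exact (hmin m' (mem_filter.2 ⟨hm'J, hm'A⟩)).not_gt hlt

lemma pairwiseDisjoint_firstEntry (hκ : Set.InjOn κ J) :
    (J : Set ι).PairwiseDisjoint (firstEntry J κ A) := by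
  have hlt : ∀ a ∈ J, ∀ b, κ a < κ b → Disjoint (firstEntry J κ A a) (firstEntry J κ A b) :=
    fun a ha b hab => Set.disjoint_left.2 fun ω hωa hωb =>
      hωb.2 (Set.mem_biUnion (mem_filter.2 ⟨ha, hab⟩) hωa.1)
  intro a ha b hb hab
  rcases lt_trichotomy (κ a) (κ b) with h | h | h
  · exact hlt a ha b h
  · exact absurd (hκ ha hb h) hab
  · exact (hlt b hb a h).symm

lemma measurableSet_firstEntry {𝓜 : MeasurableSpace Ω} {m : ι} (hm : MeasurableSet[𝓜] (A m))
    (hlt : ∀ m' ∈ J, κ m' < κ m → MeasurableSet[𝓜] (A m')) :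
    MeasurableSet[𝓜] (firstEntry J κ A m) :=
  hm.diff <| .biUnion (Finset.countable_toSet _) fun m' hm' => by
    rw [coe_filter] at hm'
    exact hlt m' hm'.1 hm'.2

theorem mul_measure_biUnion_le_of_firstEntry [MeasurableSpace Ω] {μ : Measure Ω}
    (hκ : Set.InjOn κ J) {C : ι → Set Ω} {E : Set Ω} {p : ℝ≥0∞}
    (hA : ∀ m ∈ J, MeasurableSet (A m)) (hC : ∀ m ∈ J, MeasurableSet (C m))
    (hindep : ∀ m ∈ J, IndepSet (firstEntry J κ A m) (C m) μ) (hp : ∀ m ∈ J, p ≤ μ (C m))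
    (hE : ∀ m ∈ J, A m ∩ C m ⊆ E) :
    p * μ (⋃ m ∈ J, A m) ≤ μ E := by
  have hB : ∀ m ∈ J, MeasurableSet (firstEntry J κ A m) := fun m hm =>
    measurableSet_firstEntry J κ A (hA m hm) fun m' hm' _ => hA m' hm'
  have hdisj := pairwiseDisjoint_firstEntry J κ A hκ
  calc p * μ (⋃ m ∈ J, A m) = ∑ m ∈ J, p * μ (firstEntry J κ A m) := by
        rw [← biUnion_firstEntry J κ A, measure_biUnion_finset hdisj hB, mul_sum]
    _ ≤ ∑ m ∈ J, μ (firstEntry J κ A m) * μ (C m) :=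
        sum_le_sum fun m hm => by rw [mul_comm]; gcongr; exact hp m hm
    _ = ∑ m ∈ J, μ (firstEntry J κ A m ∩ C m) :=
        sum_congr rfl fun m hm => (hindep m hm).measure_inter_eq_mul.symm
    _ = μ (⋃ m ∈ J, firstEntry J κ A m ∩ C m) :=
        (measure_biUnion_finset (hdisj.mono fun _ => Set.inter_subset_left)
          fun m hm => (hB m hm).inter (hC m hm)).symm
    _ ≤ μ E := measure_mono <| Set.iUnion₂_subset fun m hm =>
        (Set.inter_subset_inter_left _ Set.sdiff_subset).trans (hE m hm)

end FirstEntry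

section Independence

variable {Ω ι : Type*} (X : ι → Ω → ℝ)

abbrev sigmaOf (s : Set ι) : MeasurableSpace Ω :=
  ⨆ k ∈ s, MeasurableSpace.comap (X k) inferInstance

lemma measurable_sum_sigmaOf {s : Set ι} {t : Finset ι} (hts : ↑t ⊆ s) :
    Measurable[sigmaOf X s] fun ω => ∑ k ∈ t, X k ω :=
  Finset.measurable_sum t fun k hk =>
    Measurable.of_comap_le <|
      le_iSup₂ (f := fun k (_ : k ∈ s) => MeasurableSpace.comap (X k) inferInstance) k (hts hk)

variable [MeasurableSpace Ω] {μ : Measure Ω}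

lemma indep_sigmaOf_of_disjoint (hmeas : ∀ k, Measurable (X k)) (hindep : iIndepFun X μ)
    {s t : Set ι} (hst : Disjoint s t) : Indep (sigmaOf X s) (sigmaOf X t) μ :=
  indep_iSup_of_disjoint (fun k => (hmeas k).comap_le) ((iIndepFun_iff_iIndep _ _ _).1 hindep)
    hst

variable {X}

lemma variance_sum_le_of_subset (hindep : iIndepFun X μ) (hL2 : ∀ k, MemLp (X k) 2 μ)
    {s t : Finset ι} (hst : s ⊆ t) :
    variance (∑ k ∈ s, X k) μ ≤ variance (∑ k ∈ t, X k) μ := by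
  have hpair : ∀ u : Finset ι, Set.Pairwise ↑u fun i j => IndepFun (X i) (X j) μ :=
    fun _ _ _ _ _ hij => hindep.indepFun hij
  rw [IndepFun.variance_sum (fun k _ => hL2 k) (hpair s),
    IndepFun.variance_sum (fun k _ => hL2 k) (hpair t)]
  exact sum_le_sum_of_subset_of_nonneg hst fun k _ _ => variance_nonneg _ _

lemma inv_two_le_measure_neg_sqrt_le_sum [IsProbabilityMeasure μ] (hindep : iIndepFun X μ)
    (hL2 : ∀ k, MemLp (X k) 2 μ) (hmean : ∀ k, μ[X k] = 0) {s t : Finset ι} (hst : s ⊆ t) :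
    2⁻¹ ≤ μ {ω | -√(2 * variance (∑ k ∈ t, X k) μ) ≤ ∑ k ∈ s, X k ω} := by
  set c := √(2 * variance (∑ k ∈ t, X k) μ)
  have hlow : μ {ω | ∑ k ∈ s, X k ω < -c} ≤ 2⁻¹ := by
    simp_rw [← Finset.sum_apply]
    refine measure_lt_neg_sqrt_two_mul_le_half (memLp_finsetSum' _ fun k _ => hL2 k) ?_
      (variance_sum_le_of_subset hindep hL2 hst)
    simp only [Finset.sum_apply]
    rw [integral_finsetSum _ fun k _ => (hL2 k).integrable one_le_two]
    exact sum_eq_zero fun k _ => hmean k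
  have hcover : (1 : ℝ≥0∞) ≤ μ {ω | -c ≤ ∑ k ∈ s, X k ω} + μ {ω | ∑ k ∈ s, X k ω < -c} := by
    rw [← measure_univ (μ := μ)]
    refine (measure_mono fun ω _ => ?_).trans (measure_union_le _ _)
    exact le_or_gt (-c) (∑ k ∈ s, X k ω)
  rw [← ENNReal.one_sub_inv_two, tsub_le_iff_right]
  exact hcover.trans (by gcongr)

end Independence

section Lattice

open Function

variable {d : ℕ}

def pinnedBox (n : Fin d → ℕ) (r : ℕ) : Finset (Fin d → ℕ) :=
  {k ∈ Icc 1 n | ∀ i : Fin d, r ≤ i → k i = n i}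

lemma pinnedBox_zero {n : Fin d → ℕ} (hn : 1 ≤ n) : pinnedBox n 0 = {n} := by
  ext k
  simp only [pinnedBox, mem_filter, mem_Icc, mem_singleton, zero_le, true_implies]
  constructor
  · rintro ⟨-, h⟩
    exact funext h
  · rintro rfl
    exact ⟨⟨hn, le_rfl⟩, fun _ => rfl⟩

lemma pinnedBox_dim (n : Fin d → ℕ) : pinnedBox n d = Icc 1 n :=
  filter_true_of_mem fun _ _ i hi => absurd i.isLt hi.not_gt

lemma update_mem_pinnedBox {n m : Fin d → ℕ} {i : Fin d} (hm : m ∈ pinnedBox n (i + 1)) :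
    update m i (n i) ∈ pinnedBox n i := by
  simp only [pinnedBox, mem_filter, mem_Icc] at hm ⊢
  obtain ⟨⟨hm₁, hmn⟩, hpin⟩ := hm
  refine ⟨⟨le_update_iff.2 ⟨(hm₁ i).trans (hmn i), fun j _ => hm₁ j⟩,
    update_le_iff.2 ⟨le_rfl, fun j _ => hmn j⟩⟩, fun j hj => ?_⟩
  rcases eq_or_ne j i with rfl | hji
  · exact update_self ..
  · rw [update_of_ne hji]
    exact hpin j (by have := Fin.val_ne_of_ne hji; omega)

lemma coe_Icc_update_sdiff_subset (a m : Fin d → ℕ) (i : Fin d) (b : ℕ) :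
    ↑(Icc a (update m i b) \ Icc a m) ⊆ {k : Fin d → ℕ | m i < k i} := by
  intro k hk
  simp only [coe_sdiff, coe_Icc, Set.mem_sdiff, Set.mem_Icc, not_and] at hk
  rw [Set.mem_ofPred_eq]
  by_contra! hki
  refine hk.2 hk.1.1 fun j => ?_
  rcases eq_or_ne j i with rfl | hji
  · exact hki
  · exact (le_update_iff.1 hk.1.2).2 j hji

def lexKey (i : Fin d) (k : Fin d → ℕ) : ℕ ×ₗ Lex (Fin d → ℕ) :=
  toLex (k i, toLex k)

lemma lexKey_injective (i : Fin d) : Injective (lexKey i) := fun _ _ h =>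
  toLex.injective (congrArg Prod.snd (toLex.injective h))

lemma apply_le_of_lexKey_lt {i : Fin d} {a b : Fin d → ℕ} (h : lexKey i a < lexKey i b) :
    a i ≤ b i :=
  (Prod.Lex.toLex_lt_toLex'.1 h).1

variable {Ω : Type*} (X : (Fin d → ℕ) → Ω → ℝ)

def boxSum (m : Fin d → ℕ) : Ω → ℝ :=
  ∑ k ∈ Icc 1 m, X k

@[simp]
lemma boxSum_apply (m : Fin d → ℕ) (ω : Ω) : boxSum X m ω = ∑ k ∈ Icc 1 m, X k ω :=
  sum_apply ..

lemma boxSum_update {m : Fin d → ℕ} {i : Fin d} {b : ℕ} (hb : m i ≤ b) (ω : Ω) :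
    boxSum X (update m i b) ω =
      boxSum X m ω + ∑ k ∈ Icc 1 (update m i b) \ Icc 1 m, X k ω := by
  rw [boxSum_apply, boxSum_apply, add_comm,
    sum_sdiff (Icc_subset_Icc_right (le_update_iff.2 ⟨hb, fun _ _ => le_rfl⟩))]

lemma measurable_boxSum [MeasurableSpace Ω] (hmeas : ∀ k, Measurable (X k)) (m : Fin d → ℕ) :
    Measurable (boxSum X m) := by
  rw [funext (boxSum_apply X m)]
  exact Finset.measurable_sum _ fun k _ => hmeas k

lemma measurableSet_lt_boxSum {i : Fin d} {a : ℕ} {m : Fin d → ℕ} (hm : m i ≤ a) (y : ℝ) :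
    MeasurableSet[sigmaOf X {k | k i ≤ a}] {ω | y < boxSum X m ω} := by
  simp_rw [boxSum_apply]
  exact measurableSet_lt measurable_const
    (measurable_sum_sigmaOf X fun k hk => ((mem_Icc.1 hk).2 i).trans hm)

end Lattice

section Maximal

open Function

variable {d : ℕ} {Ω : Type*} [MeasurableSpace Ω] {μ : Measure Ω} {X : (Fin d → ℕ) → Ω → ℝ}

lemma indepSet_firstEntry_increment (hmeas : ∀ k, Measurable (X k)) (hindep : iIndepFun X μ)
    (J : Finset (Fin d → ℕ)) (i : Fin d) (m : Fin d → ℕ) (b : ℕ) (y a : ℝ) :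
    IndepSet (firstEntry J (lexKey i) (fun m' => {ω | y < boxSum X m' ω}) m)
      {ω | a ≤ ∑ k ∈ Icc 1 (update m i b) \ Icc 1 m, X k ω} μ := by
  have hdisj : Disjoint {k : Fin d → ℕ | k i ≤ m i} {k | m i < k i} :=
    Set.disjoint_left.2 fun _ h₁ h₂ => (Nat.lt_of_lt_of_le h₂ h₁).false
  refine (indep_sigmaOf_of_disjoint X hmeas hindep hdisj).indepSet_of_measurableSet ?_ ?_
  · exact measurableSet_firstEntry J _ _ (measurableSet_lt_boxSum X le_rfl y)
      fun _ _ h => measurableSet_lt_boxSum X (apply_le_of_lexKey_lt h) y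
  · exact measurableSet_le measurable_const
      (measurable_sum_sigmaOf X (coe_Icc_update_sdiff_subset 1 m i b))

variable [IsProbabilityMeasure μ]

lemma measure_exists_pinnedBox_succ_le (hmeas : ∀ k, Measurable (X k)) (hindep : iIndepFun X μ)
    (hL2 : ∀ k, MemLp (X k) 2 μ) (hmean : ∀ k, μ[X k] = 0) (n : Fin d → ℕ) (i : Fin d) (y : ℝ) :
    μ {ω | ∃ k ∈ pinnedBox n (i + 1), y < boxSum X k ω} ≤
      2 * μ {ω | ∃ k ∈ pinnedBox n i, y - √(2 * variance (boxSum X n) μ) < boxSum X k ω} := by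
  set c := √(2 * variance (boxSum X n) μ)
  set J := pinnedBox n (i + 1)
  set A : (Fin d → ℕ) → Set Ω := fun m => {ω | y < boxSum X m ω}
  set F : (Fin d → ℕ) → Finset (Fin d → ℕ) := fun m => Icc 1 (update m i (n i)) \ Icc 1 m
  have hm_le : ∀ m ∈ J, m ≤ n := fun m hm => (mem_Icc.1 (mem_filter.1 hm).1).2
  have hFn : ∀ m ∈ J, F m ⊆ Icc 1 n := fun m hm =>
    sdiff_subset.trans (Icc_subset_Icc_right (update_le_iff.2 ⟨le_rfl, fun j _ => hm_le m hm j⟩))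
  have hhalf : 2⁻¹ * μ (⋃ m ∈ J, A m) ≤
      μ {ω | ∃ k ∈ pinnedBox n i, y - c < boxSum X k ω} := by
    refine mul_measure_biUnion_le_of_firstEntry J (lexKey i) A (lexKey_injective i).injOn
      (C := fun m => {ω | -c ≤ ∑ k ∈ F m, X k ω})
      (fun m _ => measurableSet_lt measurable_const (measurable_boxSum X hmeas m))
      (fun m _ => measurableSet_le measurable_const
        (Finset.measurable_sum _ fun k _ => hmeas k))
      (fun m _ => indepSet_firstEntry_increment hmeas hindep J i m (n i) y (-c))
      (fun m hm => inv_two_le_measure_neg_sqrt_le_sum hindep hL2 hmean (hFn m hm)) ?_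
    rintro m hm ω ⟨hA : y < boxSum X m ω, hC : -c ≤ ∑ k ∈ F m, X k ω⟩
    refine ⟨update m i (n i), update_mem_pinnedBox hm, ?_⟩
    rw [boxSum_update X (hm_le m hm i) ω]
    linarith
  have hunion : {ω | ∃ k ∈ J, y < boxSum X k ω} = ⋃ m ∈ J, A m := by
    ext ω
    simp [A]
  calc μ {ω | ∃ k ∈ J, y < boxSum X k ω} = 2 * (2⁻¹ * μ (⋃ m ∈ J, A m)) := by
        rw [hunion, ← mul_assoc, ENNReal.mul_inv_cancel two_ne_zero ENNReal.ofNat_ne_top, one_mul]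
    _ ≤ _ := by gcongr

lemma measure_exists_pinnedBox_le (hmeas : ∀ k, Measurable (X k)) (hindep : iIndepFun X μ)
    (hL2 : ∀ k, MemLp (X k) 2 μ) (hmean : ∀ k, μ[X k] = 0) {n : Fin d → ℕ} (hn : 1 ≤ n)
    {r : ℕ} (hr : r ≤ d) (y : ℝ) :
    μ {ω | ∃ k ∈ pinnedBox n r, y < boxSum X k ω} ≤
      2 ^ r * μ {ω | y - r * √(2 * variance (boxSum X n) μ) < boxSum X n ω} := by
  induction r generalizing y with
  | zero => simp [pinnedBox_zero hn]
  | succ r ih =>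
    calc μ {ω | ∃ k ∈ pinnedBox n (r + 1), y < boxSum X k ω}
        ≤ 2 * μ {ω | ∃ k ∈ pinnedBox n r,
            y - √(2 * variance (boxSum X n) μ) < boxSum X k ω} :=
          measure_exists_pinnedBox_succ_le hmeas hindep hL2 hmean n ⟨r, hr⟩ y
      _ ≤ 2 * (2 ^ r * μ {ω | y - √(2 * variance (boxSum X n) μ) -
            r * √(2 * variance (boxSum X n) μ) < boxSum X n ω}) := by
          gcongr
          exact ih (Nat.le_of_succ_le hr) _
      _ = _ := by
          rw [← mul_assoc, ← pow_succ']
          congr 3 with ω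
          push_cast
          ring_nf

end Maximal

theorem stmt_11_general (d : ℕ)
    {Ω : Type*} [MeasurableSpace Ω] (μ : Measure Ω) [IsProbabilityMeasure μ]
    (X : (Fin d → ℕ) → Ω → ℝ)
    (hmeas : ∀ k, Measurable (X k))
    (hindep : ProbabilityTheory.iIndepFun (m := fun _ => (inferInstance : MeasurableSpace ℝ)) X μ)
    (hL2 : ∀ k, MemLp (X k) 2 μ)
    (hmean : ∀ k, ∫ ω, X k ω ∂μ = 0)
    (S : (Fin d → ℕ) → Ω → ℝ)
    (hS : ∀ n ω, S n ω = ∑ k ∈ Finset.Icc (fun _ => 1) n, X k ω)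
    (n : Fin d → ℕ) (hn : (fun _ => 1) ≤ n)
    (hne : (Finset.Icc (fun _ => 1 : Fin d → ℕ) n).Nonempty)
    (x : ℝ) :
    μ {ω | (Finset.Icc (fun _ => 1 : Fin d → ℕ) n).sup' hne (fun k => S k ω) > x} ≤
      2 ^ d * μ {ω | S n ω > x - d * Real.sqrt (2 * variance (S n) μ)} := by
  obtain rfl : S = boxSum X :=
    funext fun m => funext fun ω => (hS m ω).trans (boxSum_apply X m ω).symm
  have hmax : ∀ ω, (Icc (fun _ => 1 : Fin d → ℕ) n).sup' hne (fun k => boxSum X k ω) > x ↔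
      ∃ k ∈ pinnedBox n d, x < boxSum X k ω := fun ω => by
    rw [pinnedBox_dim, gt_iff_lt, lt_sup'_iff]
    -- `Icc (fun _ => 1) n` is `Icc 1 n` after unfolding `1 : Fin d → ℕ`
    rfl
  simp_rw [hmax, gt_iff_lt]
  exact measure_exists_pinnedBox_le hmeas hindep hL2 hmean hn le_rfl x

theorem stmt_11 (d : ℕ) (hd : 1 ≤ d)
    {Ω : Type*} [MeasurableSpace Ω] (μ : Measure Ω) [IsProbabilityMeasure μ]
    (X : (Fin d → ℕ) → Ω → ℝ)
    (hmeas : ∀ k, Measurable (X k))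
    (hindep : ProbabilityTheory.iIndepFun (m := fun _ => (inferInstance : MeasurableSpace ℝ)) X μ)
    (hL2 : ∀ k, MemLp (X k) 2 μ)
    (hmean : ∀ k, ∫ ω, X k ω ∂μ = 0)
    (S : (Fin d → ℕ) → Ω → ℝ)
    (hS : ∀ n ω, S n ω = ∑ k ∈ Finset.Icc (fun _ => 1) n, X k ω)
    (n : Fin d → ℕ) (hn : (fun _ => 1) ≤ n)
    (hne : (Finset.Icc (fun _ => 1 : Fin d → ℕ) n).Nonempty)
    (x : ℝ) :
    μ {ω | (Finset.Icc (fun _ => 1 : Fin d → ℕ) n).sup' hne (fun k => S k ω) > x} ≤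
      2 ^ d * μ {ω | S n ω > x - d * Real.sqrt (2 * variance (S n) μ)} :=
  stmt_11_general d μ X hmeas hindep hL2 hmean S hS n hn hne x
end

section
/- Suppose U_n, a_n, b_n are sequences of real random variables resp. positive reals with a_n → ∞, b_n → ∞, U_n/b_n → μ almost surely, and limsup_n a_n(U_n/b_n - μ) = 1 and liminf_n a_n(U_n/b_n - μ) = -1 almost surely. If g : ℝ → ℝ is continuously differentiable in a neighbourhood of μ with g'(μ) ≠ 0, then almost surely limsup_n a_n (g(U_n/b_n) - g(μ)) = |g'(μ)| and liminf_n a_n (g(U_n/b_n) - g(μ)) = -|g'(μ)|. -/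
/-!
Pathwise this is the delta method: for a fixed outcome put `x n = U n / b n` and
`y n = a n * (x n - μ0)`. Since `x n → μ0` and `y` is bounded (its limsup and liminf are finite),
differentiability of `g` at `μ0` gives `a n * (g (x n) - g μ0) = g' μ0 * y n + o(1)`. A null
perturbation changes neither limsup nor liminf, and multiplying by `g' μ0` maps the limit points
`±1` of `y` to `±|g' μ0|`.
-/

open MeasureTheory Filter Topology Asymptotics

section LimsupOfNullPerturbation

variable {ι α : Type*} [AddCommGroup α] [ConditionallyCompleteLinearOrder α] [DenselyOrdered α]
  [AddLeftMono α] [TopologicalSpace α] [OrderTopology α] {F : Filter ι} [F.NeBot] {u w : ι → α}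

theorem limsup_add_of_tendsto_zero (hu : IsBoundedUnder (· ≤ ·) F u)
    (hu' : IsBoundedUnder (· ≥ ·) F u) (hw : Tendsto w F (𝓝 0)) :
    limsup (u + w) F = limsup u F := by
  apply le_antisymm
  · calc limsup (u + w) F ≤ limsup u F + limsup w F :=
          limsup_add_le hu' hu hw.isBoundedUnder_ge.isCoboundedUnder_le hw.isBoundedUnder_le
      _ = limsup u F := by rw [hw.limsup_eq, add_zero]
  · calc limsup u F = limsup u F + liminf w F := by rw [hw.liminf_eq, add_zero]
      _ ≤ limsup (u + w) F :=
          le_limsup_add hu hu'.isCoboundedUnder_le hw.isBoundedUnder_le hw.isBoundedUnder_ge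

theorem liminf_add_of_tendsto_zero (hu : IsBoundedUnder (· ≤ ·) F u)
    (hu' : IsBoundedUnder (· ≥ ·) F u) (hw : Tendsto w F (𝓝 0)) :
    liminf (u + w) F = liminf u F := by
  apply le_antisymm
  · calc liminf (u + w) F = liminf (w + u) F := by rw [add_comm]
      _ ≤ limsup w F + liminf u F :=
          liminf_add_le hw.isBoundedUnder_ge hw.isBoundedUnder_le hu' hu.isCoboundedUnder_ge
      _ = liminf u F := by rw [hw.limsup_eq, zero_add]
  · calc liminf u F = liminf u F + liminf w F := by rw [hw.liminf_eq, add_zero]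
      _ ≤ liminf (u + w) F :=
          le_liminf_add hu' hu hw.isBoundedUnder_ge hw.isBoundedUnder_le.isCoboundedUnder_ge

end LimsupOfNullPerturbation

section Oscillation

variable {ι : Type*} {F : Filter ι} {y : ι → ℝ}

-- In `ℝ`, the limsup of a sequence unbounded above is the junk value `sInf ∅ = 0`.
theorem Real.isBoundedUnder_le_of_limsup_ne_zero (h : limsup y F ≠ 0) :
    IsBoundedUnder (· ≤ ·) F y :=
  not_imp_comm.1 Real.limsup_of_not_isBoundedUnder h

theorem Real.isBoundedUnder_ge_of_liminf_ne_zero (h : liminf y F ≠ 0) :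
    IsBoundedUnder (· ≥ ·) F y :=
  not_imp_comm.1 Real.liminf_of_not_isBoundedUnder h

theorem limsup_liminf_const_mul_of_oscillating [F.NeBot] (hsup : limsup y F = 1)
    (hinf : liminf y F = -1) (c : ℝ) :
    limsup (fun i => c * y i) F = |c| ∧ liminf (fun i => c * y i) F = -|c| := by
  have hle := Real.isBoundedUnder_le_of_limsup_ne_zero (hsup ▸ one_ne_zero)
  have hge := Real.isBoundedUnder_ge_of_liminf_ne_zero (by rw [hinf]; norm_num)
  have hcont : Continuous (c * ·) := continuous_const_mul c
  rcases le_total 0 c with hc | hc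
  · have hmono : Monotone (c * ·) := fun _ _ h => mul_le_mul_of_nonneg_left h hc
    rw [abs_of_nonneg hc]
    constructor
    · rw [← Function.comp_def, ← hmono.map_limsup_of_continuousAt y hcont.continuousAt hle
        hge.isCoboundedUnder_le, hsup, mul_one]
    · rw [← Function.comp_def, ← hmono.map_liminf_of_continuousAt y hcont.continuousAt
        hle.isCoboundedUnder_ge hge, hinf, mul_neg_one]
  · have hanti : Antitone (c * ·) := fun _ _ h => mul_le_mul_of_nonpos_left h hc
    rw [abs_of_nonpos hc]
    constructor
    · rw [← Function.comp_def, ← hanti.map_liminf_of_continuousAt y hcont.continuousAt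
        hle.isCoboundedUnder_ge hge, hinf, mul_neg_one]
    · rw [← Function.comp_def, ← hanti.map_limsup_of_continuousAt y hcont.continuousAt hle
        hge.isCoboundedUnder_le, hsup, mul_one, neg_neg]

end Oscillation

theorem HasDerivAt.tendsto_mul_sub_sub_mul {ι : Type*} {F : Filter ι} {g : ℝ → ℝ} {c x₀ : ℝ}
    (hg : HasDerivAt g c x₀) {a x : ι → ℝ} (hx : Tendsto x F (𝓝 x₀))
    (hy : IsBoundedUnder (· ≤ ·) F fun i => |a i * (x i - x₀)|) :
    Tendsto (fun i => a i * (g (x i) - g x₀) - c * (a i * (x i - x₀))) F (𝓝 0) := by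
  have hrem : (fun t => g t - g x₀ - (t - x₀) * c) =o[𝓝 x₀] fun t => t - x₀ := by
    simpa only [smul_eq_mul] using hasDerivAt_iff_isLittleO.1 hg
  have hy' : (fun i => a i * (x i - x₀)) =O[F] (fun _ => (1 : ℝ)) := (isBigO_one_iff ℝ).2 hy
  rw [← isLittleO_one_iff ℝ]
  refine (((isBigO_refl a F).mul_isLittleO (hrem.comp_tendsto hx)).trans_isBigO hy').congr_left
    fun i => ?_
  simp only [Function.comp_apply]
  ring

theorem HasDerivAt.limsup_liminf_mul_sub_of_oscillating {ι : Type*} {F : Filter ι} [F.NeBot]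
    {g : ℝ → ℝ} {c x₀ : ℝ} (hg : HasDerivAt g c x₀) {a x : ι → ℝ} (hx : Tendsto x F (𝓝 x₀))
    (hsup : limsup (fun i => a i * (x i - x₀)) F = 1)
    (hinf : liminf (fun i => a i * (x i - x₀)) F = -1) :
    limsup (fun i => a i * (g (x i) - g x₀)) F = |c| ∧
      liminf (fun i => a i * (g (x i) - g x₀)) F = -|c| := by
  set y := fun i => a i * (x i - x₀)
  have hle := Real.isBoundedUnder_le_of_limsup_ne_zero (hsup ▸ one_ne_zero)
  have hge := Real.isBoundedUnder_ge_of_liminf_ne_zero (by rw [hinf]; norm_num)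
  have hy := isBoundedUnder_le_abs.2 ⟨hle, hge⟩
  have hcy : IsBoundedUnder (· ≤ ·) F fun i => |c * y i| := by
    simpa only [Function.comp_def, abs_mul] using
      (monotone_mul_left_of_nonneg (abs_nonneg c)).isBoundedUnder_le_comp hy
  obtain ⟨hcy_le, hcy_ge⟩ := isBoundedUnder_le_abs.1 hcy
  have hrem := hg.tendsto_mul_sub_sub_mul hx hy
  have hsplit : (fun i => a i * (g (x i) - g x₀)) =
      (fun i => c * y i) + fun i => a i * (g (x i) - g x₀) - c * y i := by
    ext i; simp
  rw [hsplit, limsup_add_of_tendsto_zero hcy_le hcy_ge hrem,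
    liminf_add_of_tendsto_zero hcy_le hcy_ge hrem]
  exact limsup_liminf_const_mul_of_oscillating hsup hinf c

theorem stmt_15_general {Ω : Type*} [MeasurableSpace Ω] (μ : Measure Ω)
    (U : ℕ → Ω → ℝ) (a b : ℕ → ℝ)
    (μ0 : ℝ)
    (hslln : ∀ᵐ ω ∂μ, Tendsto (fun n => U n ω / b n) atTop (nhds μ0))
    (hsup : ∀ᵐ ω ∂μ, limsup (fun n => a n * (U n ω / b n - μ0)) atTop = 1)
    (hinf : ∀ᵐ ω ∂μ, liminf (fun n => a n * (U n ω / b n - μ0)) atTop = -1)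
    (g : ℝ → ℝ) (s : Set ℝ) (hs : s ∈ nhds μ0) (hg : ContDiffOn ℝ 1 g s) :
    (∀ᵐ ω ∂μ, limsup (fun n => a n * (g (U n ω / b n) - g μ0)) atTop = |deriv g μ0|) ∧
    (∀ᵐ ω ∂μ, liminf (fun n => a n * (g (U n ω / b n) - g μ0)) atTop = -|deriv g μ0|) := by
  have hd : HasDerivAt g (deriv g μ0) μ0 := ((hg.contDiffAt hs).differentiableAt_one).hasDerivAt
  have hω : ∀ᵐ ω ∂μ,
      limsup (fun n => a n * (g (U n ω / b n) - g μ0)) atTop = |deriv g μ0| ∧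
        liminf (fun n => a n * (g (U n ω / b n) - g μ0)) atTop = -|deriv g μ0| := by
    filter_upwards [hslln, hsup, hinf] with ω hx hsupω hinfω
    exact hd.limsup_liminf_mul_sub_of_oscillating hx hsupω hinfω
  exact ⟨hω.mono fun _ => And.left, hω.mono fun _ => And.right⟩

theorem stmt_15 {Ω : Type*} [MeasurableSpace Ω] (μ : Measure Ω) [IsProbabilityMeasure μ]
    (U : ℕ → Ω → ℝ) (a b : ℕ → ℝ)
    (ha_pos : ∀ n, 0 < a n) (hb_pos : ∀ n, 0 < b n)
    (ha : Tendsto a atTop atTop) (hb : Tendsto b atTop atTop)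
    (μ0 : ℝ) (hμ0 : 0 ≤ μ0)
    (hslln : ∀ᵐ ω ∂μ, Tendsto (fun n => U n ω / b n) atTop (nhds μ0))
    (hsup : ∀ᵐ ω ∂μ, limsup (fun n => a n * (U n ω / b n - μ0)) atTop = 1)
    (hinf : ∀ᵐ ω ∂μ, liminf (fun n => a n * (U n ω / b n - μ0)) atTop = -1)
    (g : ℝ → ℝ) (s : Set ℝ) (hs : s ∈ nhds μ0) (hg : ContDiffOn ℝ 1 g s)
    (hg' : deriv g μ0 ≠ 0) :
    (∀ᵐ ω ∂μ, limsup (fun n => a n * (g (U n ω / b n) - g μ0)) atTop = |deriv g μ0|) ∧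
    (∀ᵐ ω ∂μ, liminf (fun n => a n * (g (U n ω / b n) - g μ0)) atTop = -|deriv g μ0|) :=
  stmt_15_general μ U a b μ0 hslln hsup hinf g s hs hg
end

section
/- Suppose U_n/b_n → μ almost surely and limsup_n a_n(U_n/b_n - μ) = 1, liminf_n a_n(U_n/b_n - μ) = -1 almost surely, where a_n, b_n → ∞. If g is twice continuously differentiable in a neighbourhood of μ with g'(μ) = 0 and g''(μ) > 0, then almost surely limsup_n a_n² (g(U_n/b_n) - g(μ)) = g''(μ)/2. -/
/-!
By Taylor's theorem, `g y - g μ = g''(μ)/2 (y - μ)² + o((y - μ)²)`. Writing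
`cₙ = aₙ (Uₙ/bₙ - μ)`, which is bounded since its limsup and liminf are finite, this gives
`aₙ² (g (Uₙ/bₙ) - g μ) = g''(μ)/2 cₙ² + o(1)`. Finally `limsup cₙ² = (limsup |cₙ|)²` and
`limsup |cₙ| = max (limsup cₙ) (-liminf cₙ) = 1`.
-/

open MeasureTheory Filter Asymptotics Topology

theorem taylor_isLittleO_two_of_mem_nhds {f : ℝ → ℝ} {x₀ : ℝ} {s : Set ℝ} (hs : s ∈ 𝓝 x₀)
    (hf : ContDiffOn ℝ 2 f s) :
    (fun x => f x - (f x₀ + deriv f x₀ * (x - x₀) + deriv (deriv f) x₀ / 2 * (x - x₀) ^ 2))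
      =o[𝓝 x₀] fun x => (x - x₀) ^ 2 := by
  obtain ⟨ε, hε, hball⟩ := Metric.mem_nhds_iff.1 hs
  have hx₀ := Metric.mem_ball_self hε (x := x₀)
  have htaylor := taylor_isLittleO (convex_ball x₀ ε) hx₀ (hf.mono hball)
  rw [Metric.isOpen_ball.nhdsWithin_eq hx₀] at htaylor
  refine htaylor.congr_left fun x => ?_
  simp [taylor_within_apply, iteratedDerivWithin_of_isOpen_eq_iterate Metric.isOpen_ball hx₀]
  ring

namespace Real

variable {ι : Type*} {l : Filter ι} [l.NeBot] {u v : ι → ℝ}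

theorem limsup_abs_eq_max (hu : IsBoundedUnder (· ≤ ·) l u) (hu' : IsBoundedUnder (· ≥ ·) l u) :
    limsup (fun i => |u i|) l = max (limsup u l) (-liminf u l) := by
  have hneg : -liminf u l = limsup (-u) l :=
    monotone_id.neg.map_liminf_of_continuousAt u continuous_neg.continuousAt
      hu.isCoboundedUnder_flip hu'
  rw [hneg]
  exact limsup_max hu'.isCoboundedUnder_flip (isBoundedUnder_ge_neg.2 hu).isCoboundedUnder_flip
    hu (isBoundedUnder_le_neg.2 hu')

theorem limsup_const_mul_sq {L : ℝ} (hL : 0 ≤ L) (hu : IsBoundedUnder (· ≤ ·) l fun i => |u i|) :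
    limsup (fun i => L * u i ^ 2) l = L * limsup (fun i => |u i|) l ^ 2 := by
  have habs_nonneg : ∀ᶠ i in l, 0 ≤ |u i| := Eventually.of_forall fun i => abs_nonneg (u i)
  have hlimsup_nonneg : 0 ≤ limsup (fun i => |u i|) l :=
    le_limsup_of_frequently_le habs_nonneg.frequently hu
  have hmono : Monotone fun t : ℝ => L * max t 0 ^ 2 := fun s t hst =>
    mul_le_mul_of_nonneg_left (pow_le_pow_left₀ (le_max_right _ _) (max_le_max_right 0 hst) 2) hL
  have := hmono.map_limsup_of_continuousAt (fun i => |u i|) (by fun_prop) hu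
    (isBoundedUnder_of_eventually_ge habs_nonneg).isCoboundedUnder_flip
  simpa [Function.comp_def, max_eq_left hlimsup_nonneg, sq_abs] using this.symm

theorem limsup_add_of_tendsto_zero (hu : IsBoundedUnder (· ≤ ·) l u)
    (hu' : IsBoundedUnder (· ≥ ·) l u) (hv : Tendsto v l (𝓝 0)) :
    limsup (u + v) l = limsup u l := by
  apply le_antisymm
  · simpa [hv.limsup_eq] using limsup_add_le hu' hu hv.isBoundedUnder_ge.isCoboundedUnder_flip
      hv.isBoundedUnder_le
  · simpa [hv.liminf_eq] using le_limsup_add hu hu'.isCoboundedUnder_flip hv.isBoundedUnder_le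
      hv.isBoundedUnder_ge

end Real

section Rescaled

variable {ι : Type*} {l : Filter ι} {G : ℝ → ℝ} {L x₀ : ℝ} {a x : ι → ℝ}

theorem tendsto_sq_mul_sub_of_isLittleO
    (hG : (fun y => G y - L * (y - x₀) ^ 2) =o[𝓝 x₀] fun y => (y - x₀) ^ 2)
    (hx : Tendsto x l (𝓝 x₀)) (hc : (fun i => a i * (x i - x₀)) =O[l] fun _ => (1 : ℝ)) :
    Tendsto (fun i => a i ^ 2 * G (x i) - L * (a i * (x i - x₀)) ^ 2) l (𝓝 0) := by
  have hsmall := (isBigO_refl (fun i => a i ^ 2) l).mul_isLittleO (hG.comp_tendsto hx)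
  have hsq : (fun i => a i ^ 2 * (x i - x₀) ^ 2) =O[l] fun _ => (1 : ℝ) := by
    simpa [mul_pow] using hc.pow 2
  rw [← isLittleO_one_iff ℝ]
  exact (hsmall.trans_isBigO hsq).congr_left fun i => by simp only [Function.comp_apply]; ring

theorem limsup_sq_mul_eq_of_isLittleO [l.NeBot] (hL : 0 ≤ L)
    (hG : (fun y => G y - L * (y - x₀) ^ 2) =o[𝓝 x₀] fun y => (y - x₀) ^ 2)
    (hx : Tendsto x l (𝓝 x₀))
    (hsup : limsup (fun i => a i * (x i - x₀)) l = 1)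
    (hinf : liminf (fun i => a i * (x i - x₀)) l = -1) :
    limsup (fun i => a i ^ 2 * G (x i)) l = L := by
  set c := fun i => a i * (x i - x₀)
  -- A real sequence unbounded above (below) has junk limsup (liminf) `0`.
  have hc : IsBoundedUnder (· ≤ ·) l c :=
    not_imp_comm.1 Real.limsup_of_not_isBoundedUnder (by rw [hsup]; norm_num)
  have hc' : IsBoundedUnder (· ≥ ·) l c :=
    not_imp_comm.1 Real.liminf_of_not_isBoundedUnder (by rw [hinf]; norm_num)
  have habs : IsBoundedUnder (· ≤ ·) l fun i => |c i| := isBoundedUnder_le_abs.2 ⟨hc, hc'⟩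
  have hcO : c =O[l] fun _ => (1 : ℝ) := (isBigO_one_iff ℝ).2 habs
  have hsqO : (fun i => L * c i ^ 2) =O[l] fun _ => (1 : ℝ) := by
    simpa using (hcO.pow 2).const_mul_left L
  obtain ⟨hsq, hsq'⟩ := isBoundedUnder_le_abs.1 ((isBigO_one_iff ℝ).1 hsqO)
  have hlimsup_sq : limsup (fun i => L * c i ^ 2) l = L := by
    rw [Real.limsup_const_mul_sq hL habs, Real.limsup_abs_eq_max hc hc', hsup, hinf]
    norm_num
  calc limsup (fun i => a i ^ 2 * G (x i)) l
      = limsup ((fun i => L * c i ^ 2) + fun i => a i ^ 2 * G (x i) - L * c i ^ 2) l := by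
        simp only [Pi.add_def, add_sub_cancel]
    _ = L := by
        rw [Real.limsup_add_of_tendsto_zero hsq hsq' (tendsto_sq_mul_sub_of_isLittleO hG hx hcO),
          hlimsup_sq]

end Rescaled

theorem stmt_16_general {Ω : Type*} [MeasurableSpace Ω] (μ : Measure Ω)
    (U : ℕ → Ω → ℝ) (a b : ℕ → ℝ)
    (μ0 : ℝ)
    (hslln : ∀ᵐ ω ∂μ, Tendsto (fun n => U n ω / b n) atTop (nhds μ0))
    (hsup : ∀ᵐ ω ∂μ, limsup (fun n => a n * (U n ω / b n - μ0)) atTop = 1)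
    (hinf : ∀ᵐ ω ∂μ, liminf (fun n => a n * (U n ω / b n - μ0)) atTop = -1)
    (g : ℝ → ℝ) (s : Set ℝ) (hs : s ∈ nhds μ0) (hg : ContDiffOn ℝ 2 g s)
    (hg' : deriv g μ0 = 0) (hg'' : 0 < deriv (deriv g) μ0) :
    ∀ᵐ ω ∂μ, limsup (fun n => (a n) ^ 2 * (g (U n ω / b n) - g μ0)) atTop =
      deriv (deriv g) μ0 / 2 := by
  have htaylor : (fun y => g y - g μ0 - deriv (deriv g) μ0 / 2 * (y - μ0) ^ 2)
      =o[𝓝 μ0] fun y => (y - μ0) ^ 2 :=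
    (taylor_isLittleO_two_of_mem_nhds hs hg).congr_left fun y => by rw [hg']; ring
  filter_upwards [hslln, hsup, hinf] with ω hx hsupω hinfω
  exact limsup_sq_mul_eq_of_isLittleO (G := fun y => g y - g μ0) (half_pos hg'').le htaylor hx
    hsupω hinfω

theorem stmt_16 {Ω : Type*} [MeasurableSpace Ω] (μ : Measure Ω) [IsProbabilityMeasure μ]
    (U : ℕ → Ω → ℝ) (a b : ℕ → ℝ)
    (ha_pos : ∀ n, 0 < a n) (hb_pos : ∀ n, 0 < b n)
    (ha : Tendsto a atTop atTop) (hb : Tendsto b atTop atTop)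
    (μ0 : ℝ)
    (hslln : ∀ᵐ ω ∂μ, Tendsto (fun n => U n ω / b n) atTop (nhds μ0))
    (hsup : ∀ᵐ ω ∂μ, limsup (fun n => a n * (U n ω / b n - μ0)) atTop = 1)
    (hinf : ∀ᵐ ω ∂μ, liminf (fun n => a n * (U n ω / b n - μ0)) atTop = -1)
    (g : ℝ → ℝ) (s : Set ℝ) (hs : s ∈ nhds μ0) (hg : ContDiffOn ℝ 2 g s)
    (hg' : deriv g μ0 = 0) (hg'' : 0 < deriv (deriv g) μ0) :
    ∀ᵐ ω ∂μ, limsup (fun n => (a n) ^ 2 * (g (U n ω / b n) - g μ0)) atTop =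
      deriv (deriv g) μ0 / 2 :=
  stmt_16_general μ U a b μ0 hslln hsup hinf g s hs hg hg' hg''
end
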